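/- Define c(a,b) = ⌈a/b⌉·b for positive reals a, b, and for a list L = ⟨ℓ₁,…,ℓₙ⟩ of positive integers define s(L,0) = 0 and s(L,k) = c(s(L,k−1), 2^(−ℓₖ)) + 2^(−ℓₖ) for 1 ≤ k ≤ n. Then there exists a binary alphabetic code with codeword lengths ℓ₁,…,ℓₙ if and only if s(L,n) ≤ 1. -/

import Mathlib

/-- No codeword is a prefix of another. -/
def PrefixFree {n : ℕ} (w : Fin n → List Bool) : Prop :=
  ∀ i j : Fin n, i ≠ j → ¬ (w i <+: w j)

/-- The codewords are strictly increasing in the lexicographic order on binary strings. -/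
def LexIncreasing {n : ℕ} (w : Fin n → List Bool) : Prop :=
  ∀ i j : Fin n, i < j → List.Lex (· < ·) (w i) (w j)

/-- A binary alphabetic code: prefix-free and lexicographically increasing codewords. -/
def IsAlphabeticCode {n : ℕ} (w : Fin n → List Bool) : Prop :=
  PrefixFree w ∧ LexIncreasing w


/-- Yeung's ceiling function c(a,b) = ⌈a/b⌉·b. -/
noncomputable def yc (a b : ℝ) : ℝ := ⌈a / b⌉ * b

/-- Yeung's quantity s(L,k), where ℓ i is the i-th length (1-indexed). -/
noncomputable def yS (ℓ : ℕ → ℕ) : ℕ → ℝ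
  | 0 => 0
  | k + 1 => yc (yS ℓ k) ((2 : ℝ) ^ (-(ℓ (k + 1) : ℤ))) + (2 : ℝ) ^ (-(ℓ (k + 1) : ℤ))

def bval : List Bool → ℕ
  | [] => 0
  | b :: t => b.toNat * 2 ^ t.length + bval t

lemma bval_lt (w : List Bool) : bval w < 2 ^ w.length := by
  induction w with
  | nil => simp [bval]
  | cons b t ih =>
    simp only [bval, List.length_cons, pow_succ]
    cases b <;> simp [Bool.toNat] <;> omega

lemma bkey (u : List Bool) : ∀ v : List Bool,
    ((¬ u <+: v) ∧ (¬ v <+: u) ∧ List.Lex (· < ·) u v) ↔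
      (bval u + 1) * 2 ^ v.length ≤ bval v * 2 ^ u.length := by
  induction u with
  | nil =>
    intro v
    have := bval_lt v
    simp only [List.nil_prefix, not_true, false_and, bval, false_iff, not_le,
      List.length_nil, pow_zero, mul_one, zero_add, one_mul]
    omega
  | cons a s ih =>
    intro v
    cases v with
    | nil =>
      simp [List.not_lex_nil, bval]
    | cons b t =>
      cases a <;> cases b
      · -- false, false
        have hlex : List.Lex (· < ·) (false::s) (false::t) ↔ List.Lex (· < ·) s t :=
          by rw [List.cons_lex_cons_iff]; simp
        rw [hlex]
        simp only [List.cons_prefix_cons, true_and, bval, Bool.toNat_false, zero_mul,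
          zero_add, List.length_cons]
        rw [ih t]
        constructor
        · intro h
          calc (bval s + 1) * 2 ^ (t.length + 1) = ((bval s + 1) * 2 ^ t.length) * 2 := by ring
          _ ≤ (bval t * 2 ^ s.length) * 2 := by omega
          _ = bval t * 2 ^ (s.length + 1) := by ring
        · intro h
          have : ((bval s + 1) * 2 ^ t.length) * 2 ≤ (bval t * 2 ^ s.length) * 2 := by
            calc ((bval s + 1) * 2 ^ t.length) * 2 = (bval s + 1) * 2 ^ (t.length + 1) := by ring
            _ ≤ bval t * 2 ^ (s.length + 1) := h
            _ = (bval t * 2 ^ s.length) * 2 := by ring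
          omega
      · -- false, true
        have hs := bval_lt s
        constructor
        · intro _
          simp only [bval, Bool.toNat_false, Bool.toNat_true, zero_mul, zero_add, one_mul,
            List.length_cons]
          calc (bval s + 1) * 2 ^ (t.length + 1) ≤ 2 ^ s.length * 2 ^ (t.length + 1) :=
                Nat.mul_le_mul_right _ (by omega)
          _ = 2 ^ t.length * 2 ^ (s.length + 1) := by ring
          _ ≤ (2 ^ t.length + bval t) * 2 ^ (s.length + 1) :=
                Nat.mul_le_mul_right _ (by omega)
        · intro _
          refine ⟨?_, ?_, List.Lex.rel (by simp)⟩
          · rw [List.cons_prefix_cons]; simp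
          · rw [List.cons_prefix_cons]; simp
      · -- true, false
        have ht := bval_lt t
        constructor
        · rintro ⟨-, -, h3⟩
          cases h3 with
          | rel h => exact absurd h (by decide)
        · intro h
          exfalso
          simp only [bval, Bool.toNat_true, Bool.toNat_false, one_mul, zero_mul, zero_add,
            List.length_cons] at h
          have h2 : bval t * 2 ^ (s.length + 1) < 2 ^ t.length * 2 ^ (s.length + 1) :=
            (Nat.mul_lt_mul_right (Nat.two_pow_pos _)).mpr ht
          have e : (2 ^ s.length + bval s + 1) * 2 ^ (t.length + 1)
              = 2 ^ s.length * 2 ^ (t.length + 1) + (bval s + 1) * 2 ^ (t.length + 1) := by ring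
          have h3 : 2 ^ t.length * 2 ^ (s.length + 1) = 2 ^ s.length * 2 ^ (t.length + 1) := by
            ring
          have h4 : 0 < (bval s + 1) * 2 ^ (t.length + 1) := by positivity
          omega
      · -- true, true
        have hlex : List.Lex (· < ·) (true::s) (true::t) ↔ List.Lex (· < ·) s t :=
          by rw [List.cons_lex_cons_iff]; simp
        rw [hlex]
        simp only [List.cons_prefix_cons, true_and, bval, Bool.toNat_true, one_mul,
          List.length_cons]
        rw [ih t]
        have h3 : 2 ^ s.length * 2 ^ (t.length + 1) = 2 ^ t.length * 2 ^ (s.length + 1) := by ring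
        have e1 : (2 ^ s.length + bval s + 1) * 2 ^ (t.length + 1)
            = 2 ^ s.length * 2 ^ (t.length + 1) + ((bval s + 1) * 2 ^ t.length) * 2 := by ring
        have e2 : (2 ^ t.length + bval t) * 2 ^ (s.length + 1)
            = 2 ^ t.length * 2 ^ (s.length + 1) + (bval t * 2 ^ s.length) * 2 := by ring
        constructor <;> intro h <;> omega

def benc : ℕ → ℕ → List Bool
  | 0, _ => []
  | L + 1, m => (decide (2 ^ L ≤ m)) :: benc L (m % 2 ^ L)

lemma benc_length (L m : ℕ) : (benc L m).length = L := by
  induction L generalizing m with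
  | zero => rfl
  | succ L ih => simp [benc, ih]

lemma bval_benc (L m : ℕ) (h : m < 2 ^ L) : bval (benc L m) = m := by
  induction L generalizing m with
  | zero => simp [benc, bval]; omega
  | succ L ih =>
    have h2 : m % 2 ^ L < 2 ^ L := Nat.mod_lt _ (Nat.two_pow_pos _)
    simp only [benc, bval, benc_length, ih _ h2]
    by_cases hc : 2 ^ L ≤ m
    · have hd : decide (2 ^ L ≤ m) = true := decide_eq_true hc
      simp only [hd, Bool.toNat_true, one_mul]
      have hdm := Nat.div_add_mod m (2 ^ L)
      have h1 : m / 2 ^ L = 1 := by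
        have h2 : m / 2 ^ L < 2 := by
          rw [Nat.div_lt_iff_lt_mul (Nat.two_pow_pos _)]
          rw [pow_succ] at h; omega
        have := Nat.le_div_iff_mul_le (Nat.two_pow_pos _) |>.mpr (by omega : 1 * 2 ^ L ≤ m)
        omega
      rw [h1, mul_one] at hdm
      omega
    · have hd : decide (2 ^ L ≤ m) = false := decide_eq_false hc
      simp only [hd, Bool.toNat_false, zero_mul, zero_add]
      exact Nat.mod_eq_of_lt (by omega)

lemma yc_ge {a b : ℝ} (hb : 0 < b) : a ≤ yc a b := by
  rw [yc]
  calc a = (a / b) * b := (div_mul_cancel₀ a hb.ne').symm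
  _ ≤ ⌈a / b⌉ * b := mul_le_mul_of_nonneg_right (Int.le_ceil _) hb.le

lemma yc_mono {a a' b : ℝ} (hb : 0 < b) (h : a ≤ a') : yc a b ≤ yc a' b := by
  rw [yc, yc]
  have : (⌈a / b⌉ : ℝ) ≤ ⌈a' / b⌉ := by
    exact_mod_cast Int.ceil_le_ceil (by gcongr)
  exact mul_le_mul_of_nonneg_right this hb.le

lemma yc_natmul (m : ℕ) {b : ℝ} (hb : 0 < b) : yc (m * b) b = m * b := by
  rw [yc, mul_div_cancel_right₀ _ hb.ne']
  norm_num

lemma hbpos (e : ℕ) : (0:ℝ) < (2 : ℝ) ^ (-(e : ℤ)) := zpow_pos (by norm_num) _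

lemma yS_nonneg (ℓ : ℕ → ℕ) (k : ℕ) : 0 ≤ yS ℓ k := by
  induction k with
  | zero => simp [yS]
  | succ k ih =>
    have hb := hbpos (ℓ (k + 1))
    have := yc_ge (a := yS ℓ k) hb
    simp only [yS]; linarith

lemma yS_succ_ge (ℓ : ℕ → ℕ) (k : ℕ) :
    yS ℓ k + (2 : ℝ) ^ (-(ℓ (k+1) : ℤ)) ≤ yS ℓ (k + 1) := by
  have hb := hbpos (ℓ (k + 1))
  have := yc_ge (a := yS ℓ k) hb
  simp only [yS]; linarith

lemma yS_mono (ℓ : ℕ → ℕ) : Monotone (yS ℓ) := by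
  apply monotone_nat_of_le_succ
  intro k
  have hb := hbpos (ℓ (k + 1))
  have := yS_succ_ge ℓ k
  linarith

lemma dy_le_iff (p q Lp Lq : ℕ) :
    (p : ℝ) * (2:ℝ) ^ (-(Lp : ℤ)) ≤ (q : ℝ) * (2:ℝ) ^ (-(Lq : ℤ)) ↔
      p * 2 ^ Lq ≤ q * 2 ^ Lp := by
  rw [zpow_neg, zpow_neg, ← div_eq_mul_inv, ← div_eq_mul_inv,
    div_le_div_iff₀ (by positivity) (by positivity)]
  rw [zpow_natCast, zpow_natCast]
  exact_mod_cast Iff.rfl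

lemma dy_le_one_iff (p e : ℕ) : (p:ℝ) * (2:ℝ)^(-(e : ℤ)) ≤ 1 ↔ p ≤ 2 ^ e := by
  rw [zpow_neg, zpow_natCast, ← div_eq_mul_inv, div_le_one (by positivity)]
  exact_mod_cast Iff.rfl

/-- Yeung's condition: an alphabetic code with lengths ℓ₁,…,ℓₙ exists iff s(L,n) ≤ 1. -/
theorem yeung_condition (n : ℕ) (hn : 1 ≤ n) (ℓ : ℕ → ℕ)
    (hpos : ∀ i, 1 ≤ i → i ≤ n → 0 < ℓ i) :
    (∃ w : Fin n → List Bool, IsAlphabeticCode w ∧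
        ∀ i : Fin n, (w i).length = ℓ (i.1 + 1)) ↔ yS ℓ n ≤ 1 := by
  constructor
  · -- a code exists → yS ℓ n ≤ 1
    rintro ⟨w, ⟨hpf, hlex⟩, hlen⟩
    have key : ∀ k, ∀ hk : k < n,
        yS ℓ (k+1) ≤ ((bval (w ⟨k, hk⟩) + 1 : ℕ) : ℝ) * (2:ℝ) ^ (-(ℓ (k+1) : ℤ)) := by
      intro k
      induction k with
      | zero =>
        intro hk
        have hb := hbpos (ℓ 1)
        have h0 : yc 0 ((2:ℝ) ^ (-(ℓ 1 : ℤ))) = 0 := by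
          rw [yc, zero_div]; simp
        have h1 : (1:ℝ) ≤ ((bval (w ⟨0, hk⟩) + 1 : ℕ) : ℝ) := by
          exact_mod_cast Nat.succ_le_succ (Nat.zero_le _)
        show yc (yS ℓ 0) _ + _ ≤ _
        simp only [yS, h0, zero_add]
        nlinarith
      | succ k ih =>
        intro hk
        have hk' : k < n := Nat.lt_of_succ_lt hk
        set i : Fin n := ⟨k, hk'⟩
        set j : Fin n := ⟨k+1, hk⟩
        have hij : i < j := by simp [i, j, Fin.lt_def]
        have hnum := (bkey (w i) (w j)).mp
          ⟨hpf i j (Fin.ne_of_lt hij), hpf j i (Fin.ne_of_lt hij).symm, hlex i j hij⟩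
        rw [hlen i, hlen j] at hnum
        have step : ((bval (w i) + 1 : ℕ) : ℝ) * (2:ℝ) ^ (-(ℓ (k+1) : ℤ))
            ≤ ((bval (w j) : ℕ) : ℝ) * (2:ℝ) ^ (-(ℓ (k+2) : ℤ)) := by
          apply (dy_le_iff (bval (w i) + 1) (bval (w j)) (ℓ (k+1)) (ℓ (k+2))).mpr
          simpa using hnum
        have hb' := hbpos (ℓ (k+2))
        have h1 : yS ℓ (k+1) ≤ ((bval (w j) : ℕ) : ℝ) * (2:ℝ) ^ (-(ℓ (k+2) : ℤ)) :=
          le_trans (ih hk') step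
        have h2 : yc (yS ℓ (k+1)) ((2:ℝ) ^ (-(ℓ (k+2) : ℤ)))
            ≤ ((bval (w j) : ℕ) : ℝ) * (2:ℝ) ^ (-(ℓ (k+2) : ℤ)) := by
          calc yc (yS ℓ (k+1)) ((2:ℝ) ^ (-(ℓ (k+2) : ℤ)))
              ≤ yc (((bval (w j) : ℕ) : ℝ) * (2:ℝ) ^ (-(ℓ (k+2) : ℤ)))
                  ((2:ℝ) ^ (-(ℓ (k+2) : ℤ))) := yc_mono hb' h1
          _ = ((bval (w j) : ℕ) : ℝ) * (2:ℝ) ^ (-(ℓ (k+2) : ℤ)) := yc_natmul _ hb'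
        show yc (yS ℓ (k+1)) _ + _ ≤ _
        push_cast at h2 ⊢
        linarith
    have hfin := key (n-1) (by omega)
    have hn1 : n - 1 + 1 = n := by omega
    rw [hn1] at hfin
    refine le_trans hfin ?_
    rw [dy_le_one_iff]
    have := bval_lt (w ⟨n-1, by omega⟩)
    rw [hlen ⟨n-1, by omega⟩] at this
    simpa [hn1] using this
  · -- yS ℓ n ≤ 1 → a code exists
    intro hs1
    set m : ℕ → ℕ := fun k => (⌈yS ℓ k / (2:ℝ) ^ (-(ℓ (k+1) : ℤ))⌉).toNat with hm
    have hceil : ∀ k, (0:ℤ) ≤ ⌈yS ℓ k / (2:ℝ) ^ (-(ℓ (k+1) : ℤ))⌉ :=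
      fun k => Int.ceil_nonneg (div_nonneg (yS_nonneg ℓ k) (hbpos _).le)
    have hyc : ∀ k, yc (yS ℓ k) ((2:ℝ) ^ (-(ℓ (k+1) : ℤ)))
        = (m k : ℝ) * (2:ℝ) ^ (-(ℓ (k+1) : ℤ)) := by
      intro k
      rw [yc]
      congr 1
      rw [hm]
      simp only
      exact_mod_cast (Int.toNat_of_nonneg (hceil k)).symm
    have hSsucc : ∀ k, yS ℓ (k+1) = ((m k + 1 : ℕ) : ℝ) * (2:ℝ) ^ (-(ℓ (k+1) : ℤ)) := by
      intro k
      show yc (yS ℓ k) _ + _ = _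
      rw [hyc k]
      push_cast
      ring
    have hmlt : ∀ k, k < n → m k < 2 ^ (ℓ (k+1)) := by
      intro k hk
      have h1 : yS ℓ (k+1) ≤ 1 := le_trans (yS_mono ℓ (by omega : k+1 ≤ n)) hs1
      rw [hSsucc k] at h1
      have := (dy_le_one_iff (m k + 1) (ℓ (k+1))).mp h1
      omega
    refine ⟨fun i => benc (ℓ (i.1+1)) (m i.1), ⟨?_, ?_⟩, ?_⟩
    · -- PrefixFree
      have main : ∀ i j : Fin n, i < j →
          (¬ benc (ℓ (i.1+1)) (m i.1) <+: benc (ℓ (j.1+1)) (m j.1)) ∧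
          (¬ benc (ℓ (j.1+1)) (m j.1) <+: benc (ℓ (i.1+1)) (m i.1)) ∧
          List.Lex (· < ·) (benc (ℓ (i.1+1)) (m i.1)) (benc (ℓ (j.1+1)) (m j.1)) := by
        intro i j hij
        apply (bkey _ _).mpr
        rw [benc_length, benc_length, bval_benc _ _ (hmlt i.1 i.2), bval_benc _ _ (hmlt j.1 j.2)]
        apply (dy_le_iff (m i.1 + 1) (m j.1) (ℓ (i.1+1)) (ℓ (j.1+1))).mp
        calc ((m i.1 + 1 : ℕ) : ℝ) * (2:ℝ) ^ (-(ℓ (i.1+1) : ℤ))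
            = yS ℓ (i.1+1) := (hSsucc i.1).symm
        _ ≤ yS ℓ j.1 := yS_mono ℓ (by omega : i.1+1 ≤ j.1)
        _ ≤ yc (yS ℓ j.1) ((2:ℝ) ^ (-(ℓ (j.1+1) : ℤ))) := yc_ge (hbpos _)
        _ = (m j.1 : ℝ) * (2:ℝ) ^ (-(ℓ (j.1+1) : ℤ)) := hyc j.1
      intro i j hne
      rcases lt_trichotomy i j with h | h | h
      · exact (main i j h).1
      · exact absurd h hne
      · exact (main j i h).2.1
    · -- LexIncreasing
      intro i j hij
      apply ((bkey _ _).mpr ?_).2.2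
      rw [benc_length, benc_length, bval_benc _ _ (hmlt i.1 i.2), bval_benc _ _ (hmlt j.1 j.2)]
      apply (dy_le_iff (m i.1 + 1) (m j.1) (ℓ (i.1+1)) (ℓ (j.1+1))).mp
      calc ((m i.1 + 1 : ℕ) : ℝ) * (2:ℝ) ^ (-(ℓ (i.1+1) : ℤ))
          = yS ℓ (i.1+1) := (hSsucc i.1).symm
      _ ≤ yS ℓ j.1 := yS_mono ℓ (by omega : i.1+1 ≤ j.1)
      _ ≤ yc (yS ℓ j.1) ((2:ℝ) ^ (-(ℓ (j.1+1) : ℤ))) := yc_ge (hbpos _)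
      _ = (m j.1 : ℝ) * (2:ℝ) ^ (-(ℓ (j.1+1) : ℤ)) := hyc j.1
    · intro i
      exact benc_length _ _
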